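/- arXiv:hep-th/9305184 — 4 statements merged into one kernel-verified Lean document; each statement's English description precedes it below -/
import Mathlib

section
/- The derivative at s = 0 of the Riemann zeta function equals −(1/2)·log(2π), i.e. ζ′(0) = −log(2π)/2 (the Lerch formula, for which the paper gives a new proof via gluing of analytic torsions). -/
/-- Lerch's formula: the derivative of the Riemann zeta function at `s = 0`
equals `-(1/2) · log (2π)`. -/
theorem riemannZeta_deriv_zero :
    deriv riemannZeta 0 = -(Real.log (2 * Real.pi) : ℂ) / 2 := by
  rw [deriv_riemannZeta_zero, Complex.ofReal_log (by positivity), Complex.ofReal_mul,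
    Complex.ofReal_ofNat]
end

section
/- For every real b > 0, the derivative at s = 0 of the entire-near-0 function s ↦ (π/(2b))^{−2s}·(1 − 2^{−2s})·ζ(2s) equals −log 2. (Equivalently, the derivative at zero of the zeta-function ζ₁(s; M) of the Laplacian on (0,b] with Dirichlet condition at 0 and Neumann condition at b equals 2·ζ(0)·log 2 = −log 2, so the analytic torsion norm of the interval satisfies ‖1‖²_{T₀((0,b])} = exp(−∂_sζ₁(0)) = 2.) -/
/-! The middle factor `1 - 2^{-2s}` vanishes at `s = 0`, so by the product rule only its own
derivative `2 log 2` survives, multiplied by the values `(π/(2b))^0 = 1` and `ζ(0) = -1/2` of the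
other two factors. -/

theorem HasDerivAt.mul_mul_of_eq_zero {𝕜 : Type*} [NontriviallyNormedField 𝕜] {f g h : 𝕜 → 𝕜}
    {g' x : 𝕜} (hf : DifferentiableAt 𝕜 f x) (hg : HasDerivAt g g' x) (hgx : g x = 0)
    (hh : DifferentiableAt 𝕜 h x) :
    HasDerivAt (fun s => f s * g s * h s) (f x * g' * h x) x :=
  ((hf.hasDerivAt.mul hg).mul hh.hasDerivAt).congr_deriv (by simp only [Pi.mul_apply, hgx]; ring)

theorem Complex.hasDerivAt_one_sub_cpow_neg_two_mul {c : ℂ} (hc : c ≠ 0) :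
    HasDerivAt (fun s : ℂ => 1 - c ^ (-2 * s)) (2 * Complex.log c) 0 := by
  have hlin : HasDerivAt (fun s : ℂ => -2 * s) (-2) 0 := by
    simpa using (hasDerivAt_id (0 : ℂ)).const_mul (-2 : ℂ)
  exact ((hlin.const_cpow (Or.inl hc)).const_sub 1).congr_deriv
    (by simp only [mul_zero, cpow_zero, one_mul, mul_neg, neg_neg]; ring)

theorem Complex.differentiableAt_cpow_neg_two_mul {c : ℂ} (hc : c ≠ 0) (z : ℂ) :
    DifferentiableAt ℂ (fun s : ℂ => c ^ (-2 * s)) z :=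
  (differentiableAt_id.const_mul (-2 : ℂ)).const_cpow (Or.inl hc)

theorem differentiableAt_riemannZeta_two_mul_zero :
    DifferentiableAt ℂ (fun s : ℂ => riemannZeta (2 * s)) 0 := by
  have hζ : DifferentiableAt ℂ riemannZeta (2 * 0) := by
    rw [mul_zero]
    exact differentiableAt_riemannZeta zero_ne_one
  exact hζ.comp 0 (differentiableAt_id.const_mul 2)

/-- The derivative at `s = 0` of `s ↦ (π/(2b))^{-2s} (1 - 2^{-2s}) ζ(2s)` (the
zeta-function of the Laplacian on `(0,b]` with Dirichlet condition at `0` and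
Neumann condition at `b`) equals `-log 2`. -/
theorem deriv_zero_zeta_interval_dirichlet_neumann (b : ℝ) (hb : 0 < b) :
    deriv (fun s : ℂ =>
        ((Real.pi / (2 * b) : ℝ) : ℂ) ^ (-2 * s) * (1 - (2 : ℂ) ^ (-2 * s)) *
          riemannZeta (2 * s)) 0
      = -(Real.log 2 : ℂ) := by
  have ha : ((Real.pi / (2 * b) : ℝ) : ℂ) ≠ 0 := by
    rw [ne_eq, Complex.ofReal_eq_zero]
    positivity
  have hF := HasDerivAt.mul_mul_of_eq_zero (Complex.differentiableAt_cpow_neg_two_mul ha 0)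
    (Complex.hasDerivAt_one_sub_cpow_neg_two_mul two_ne_zero) (by simp)
    differentiableAt_riemannZeta_two_mul_zero
  rw [hF.deriv, Complex.ofReal_log zero_le_two]
  simp only [mul_zero, Complex.cpow_zero, riemannZeta_zero]
  push_cast
  ring
end

section
/- For every ε₁ with 0 < ε₁ ≤ π/2 and every complex s with Re s > 0, the complex Gamma function satisfies |Γ(s)| ≤ (sin ε₁)^{−Re s} · Γ(Re s) · exp(−(π/2 − ε₁)·|Im s|), where Γ(Re s) denotes the real Gamma function evaluated at the positive real number Re s. -/
/-!
Rotate the line of integration in Euler's integral: for `Re a > 0`,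
`∫₀^∞ t^(s-1) e^(-a t) dt = a^(-s) Γ(s)`, since both sides are holomorphic in `a`
and agree for real `a > 0`. With `a = e^(iφ)`, `|φ| < π/2`, the trivial estimate
of the integral gives `|Γ(s)| ≤ (cos φ)^(-Re s) Γ(Re s) e^(-φ Im s)`; take
`φ = ±(π/2 - ε₁)` with the sign of `Im s`.
-/

open MeasureTheory Set Filter Topology

namespace Complex

lemma norm_cpow_mul_exp_neg_mul {w a : ℂ} {t : ℝ} (ht : 0 < t) :
    ‖(t : ℂ) ^ w * cexp (-(a * t))‖ = t ^ w.re * Real.exp (-(a.re * t)) := by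
  rw [norm_mul, norm_cpow_eq_rpow_re_of_pos ht, norm_exp]
  simp

lemma integrableOn_cpow_mul_exp_neg_mul {w a : ℂ} (hw : -1 < w.re) (ha : 0 < a.re) :
    IntegrableOn (fun t : ℝ ↦ (t : ℂ) ^ w * cexp (-(a * t))) (Ioi 0) := by
  have hmeas : AEStronglyMeasurable (fun t : ℝ ↦ (t : ℂ) ^ w * cexp (-(a * t)))
      (volume.restrict (Ioi 0)) := by
    refine ContinuousOn.aestronglyMeasurable (fun t ht ↦ ContinuousAt.continuousWithinAt ?_)
      measurableSet_Ioi
    exact ((continuousAt_cpow_const (ofReal_mem_slitPlane.2 ht)).comp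
      continuous_ofReal.continuousAt).mul (by fun_prop)
  refine (integrableOn_rpow_mul_exp_neg_mul_rpow hw one_pos ha).mono' hmeas ?_
  filter_upwards [self_mem_ae_restrict measurableSet_Ioi] with t ht
  rw [norm_cpow_mul_exp_neg_mul ht, Real.rpow_one, neg_mul]

lemma hasDerivAt_integral_cpow_mul_exp_neg_mul {w a₀ : ℂ} (hw : -1 < w.re)
    (ha₀ : 0 < a₀.re) :
    HasDerivAt (fun a : ℂ ↦ ∫ t : ℝ in Ioi 0, (t : ℂ) ^ w * cexp (-(a * t)))
      (∫ t : ℝ in Ioi 0, -((t : ℂ) ^ (w + 1) * cexp (-(a₀ * t)))) a₀ := by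
  have hw' : -1 < (w + 1).re := by rw [add_re, one_re]; linarith
  have hball : ∀ a ∈ Metric.ball a₀ (a₀.re / 2), a₀.re / 2 < a.re := fun a ha ↦ by
    have := (abs_re_le_norm (a - a₀)).trans_lt (mem_ball_iff_norm.1 ha)
    rw [sub_re] at this
    linarith [(abs_lt.1 this).1]
  refine (hasDerivAt_integral_of_dominated_loc_of_deriv_le (μ := volume.restrict (Ioi 0))
    (F := fun (a : ℂ) (t : ℝ) ↦ (t : ℂ) ^ w * cexp (-(a * t)))
    (F' := fun (a : ℂ) (t : ℝ) ↦ -((t : ℂ) ^ (w + 1) * cexp (-(a * t))))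
    (bound := fun t : ℝ ↦ t ^ (w + 1).re * Real.exp (-(a₀.re / 2) * t ^ (1 : ℝ)))
    (Metric.ball_mem_nhds a₀ (half_pos ha₀)) ?_
    (integrableOn_cpow_mul_exp_neg_mul hw ha₀)
    (integrableOn_cpow_mul_exp_neg_mul hw' ha₀).neg.aestronglyMeasurable ?_
    (integrableOn_rpow_mul_exp_neg_mul_rpow hw' one_pos (half_pos ha₀)) ?_).2
  · filter_upwards [Metric.ball_mem_nhds a₀ (half_pos ha₀)] with a ha
    exact (integrableOn_cpow_mul_exp_neg_mul hw ((half_pos ha₀).trans (hball a ha))).1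
  · filter_upwards [self_mem_ae_restrict measurableSet_Ioi] with t (ht : 0 < t) a ha
    rw [norm_neg, norm_cpow_mul_exp_neg_mul ht, Real.rpow_one]
    gcongr
    nlinarith [hball a ha]
  · filter_upwards [self_mem_ae_restrict measurableSet_Ioi] with t (ht : 0 < t) a _
    rw [cpow_add _ _ (ofReal_ne_zero.2 ht.ne'), cpow_one]
    exact (((hasDerivAt_id' a).mul_const (t : ℂ)).fun_neg.cexp.const_mul
      ((t : ℂ) ^ w)).congr_deriv (by ring)

lemma differentiableOn_integral_cpow_mul_exp_neg_mul {w : ℂ} (hw : -1 < w.re) :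
    DifferentiableOn ℂ (fun a : ℂ ↦ ∫ t : ℝ in Ioi 0, (t : ℂ) ^ w * cexp (-(a * t)))
      {a | 0 < a.re} := fun _ ha ↦
  (hasDerivAt_integral_cpow_mul_exp_neg_mul hw ha).differentiableAt.differentiableWithinAt

lemma eqOn_re_pos_of_eq_ofReal {E : Type*} [NormedAddCommGroup E] [NormedSpace ℂ E]
    [CompleteSpace E] {f g : ℂ → E} (hf : DifferentiableOn ℂ f {z | 0 < z.re})
    (hg : DifferentiableOn ℂ g {z | 0 < z.re}) (hfg : ∀ r : ℝ, 0 < r → f r = g r) :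
    EqOn f g {z | 0 < z.re} := by
  have hU : IsOpen {z : ℂ | 0 < z.re} := isOpen_lt continuous_const continuous_re
  have hreal : Tendsto ((↑) : ℝ → ℂ) (𝓝[≠] 1) (𝓝[≠] 1) :=
    continuous_ofReal.continuousWithinAt.tendsto_nhdsWithin fun _ ↦ by simp_all
  refine (hf.analyticOnNhd hU).eqOn_of_preconnected_of_frequently_eq (hg.analyticOnNhd hU)
    (convex_halfSpace_re_gt 0).isPreconnected (by simp) (hreal.frequently ?_)
  exact ((eventually_gt_nhds one_pos).filter_mono nhdsWithin_le_nhds).mono hfg |>.frequently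

lemma integral_cpow_mul_exp_neg_mul_Ioi_of_re_pos {a s : ℂ} (ha : 0 < a.re) (hs : 0 < s.re) :
    ∫ t : ℝ in Ioi 0, (t : ℂ) ^ (s - 1) * cexp (-(a * t)) = (1 / a) ^ s * Gamma s := by
  have hpow : DifferentiableOn ℂ (fun a : ℂ ↦ (1 / a) ^ s * Gamma s) {a | 0 < a.re} := by
    intro z (hz : 0 < z.re)
    have hinv : 0 < (1 / z).re := by
      rw [one_div, inv_re]
      exact div_pos hz (normSq_pos.2 (ne_zero_of_re_pos hz))
    exact (((differentiableAt_const 1).div differentiableAt_id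
      (ne_zero_of_re_pos hz)).cpow_const (Or.inl hinv)).mul_const _ |>.differentiableWithinAt
  exact eqOn_re_pos_of_eq_ofReal (differentiableOn_integral_cpow_mul_exp_neg_mul
    (by simpa using hs)) hpow (fun r hr ↦ integral_cpow_mul_exp_neg_mul_Ioi hs hr) ha

lemma norm_Gamma_le_norm_cpow_mul {a s : ℂ} (ha : 0 < a.re) (hs : 0 < s.re) :
    ‖Gamma s‖ ≤ ‖a ^ s‖ * (a.re ^ (-s.re) * Real.Gamma s.re) := by
  have hGamma : Gamma s = a ^ s * ∫ t : ℝ in Ioi 0, (t : ℂ) ^ (s - 1) * cexp (-(a * t)) := by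
    rw [integral_cpow_mul_exp_neg_mul_Ioi_of_re_pos ha hs, one_div,
      inv_cpow _ _ (slitPlane_arg_ne_pi (Or.inl ha)),
      mul_inv_cancel_left₀ (cpow_ne_zero_iff.2 (Or.inl (ne_zero_of_re_pos ha)))]
  have hint : ‖∫ t : ℝ in Ioi 0, (t : ℂ) ^ (s - 1) * cexp (-(a * t))‖ ≤
      a.re ^ (-s.re) * Real.Gamma s.re := calc
    _ ≤ ∫ t : ℝ in Ioi 0, t ^ (s.re - 1) * Real.exp (-(a.re * t)) := by
      refine (norm_integral_le_integral_norm _).trans_eq (setIntegral_congr_fun measurableSet_Ioi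
        fun t (ht : 0 < t) ↦ ?_)
      rw [norm_cpow_mul_exp_neg_mul ht, sub_re, one_re]
    _ = a.re ^ (-s.re) * Real.Gamma s.re := by
      rw [Real.integral_rpow_mul_exp_neg_mul_Ioi hs ha, one_div, Real.inv_rpow ha.le,
        Real.rpow_neg ha.le]
  rw [hGamma, norm_mul]
  gcongr

lemma norm_Gamma_le_of_abs_lt_pi_div_two {s : ℂ} (hs : 0 < s.re) {φ : ℝ}
    (hφ : |φ| < Real.pi / 2) :
    ‖Gamma s‖ ≤ Real.cos φ ^ (-s.re) * Real.Gamma s.re * Real.exp (-(φ * s.im)) := by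
  have hcos : 0 < Real.cos φ := Real.cos_pos_of_mem_Ioo (abs_lt.1 hφ)
  have harg : arg (cexp (φ * I)) = φ := by
    rw [arg_exp_mul_I, toIocMod_eq_self]
    constructor <;> linarith [abs_lt.1 hφ, Real.pi_pos]
  have := norm_Gamma_le_norm_cpow_mul (a := cexp (φ * I)) (by rwa [exp_ofReal_mul_I_re]) hs
  rwa [norm_cpow_of_ne_zero (exp_ne_zero _), norm_exp_ofReal_mul_I, harg, Real.one_rpow,
    exp_ofReal_mul_I_re, one_div, ← Real.exp_neg, mul_comm] at this

end Complex

/-- For `0 < ε₁ ≤ π/2` and `Re s > 0`, the complex Gamma function satisfies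
`|Γ(s)| ≤ (sin ε₁)^{-Re s} · Γ(Re s) · exp(-(π/2 - ε₁)|Im s|)`. -/
theorem abs_complexGamma_le (ε₁ : ℝ) (hε₁ : 0 < ε₁) (hε₂ : ε₁ ≤ Real.pi / 2)
    (s : ℂ) (hs : 0 < s.re) :
    ‖Complex.Gamma s‖ ≤
      Real.sin ε₁ ^ (-s.re) * Real.Gamma s.re *
        Real.exp (-(Real.pi / 2 - ε₁) * |s.im|) := by
  have hθ : |Real.pi / 2 - ε₁| < Real.pi / 2 := abs_lt.2 ⟨by linarith, by linarith⟩
  rcases abs_cases s.im with ⟨him, -⟩ | ⟨him, -⟩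
  · rw [him]
    simpa only [Real.cos_pi_div_two_sub, neg_mul] using
      Complex.norm_Gamma_le_of_abs_lt_pi_div_two hs hθ
  · rw [him]
    simpa only [Real.cos_neg, Real.cos_pi_div_two_sub, neg_mul, mul_neg, neg_neg] using
      Complex.norm_Gamma_le_of_abs_lt_pi_div_two hs (φ := -(Real.pi / 2 - ε₁))
        (by rwa [abs_neg])
end

section
/- Let α, β ∈ ℝ with (α,β) ≠ (0,0) and let f : ℝ → ℝ be continuous on [−1,1]. Let u(x) := ∫_{−1}^{1} G_ν(x,y)·f(y) dy, where G_ν is the ν-transmission Green kernel defined below. Then: (i) u(−1) = u(1) = 0; (ii) for every x ∈ (−1,0) ∪ (0,1), u is twice differentiable at x with u″(x) = −f(x); (iii) the one-sided limits u(0⁻) := lim_{x→0⁻} u(x), u(0⁺) := lim_{x→0⁺} u(x), u′(0⁻) := lim_{x→0⁻} u′(x), u′(0⁺) := lim_{x→0⁺} u′(x) exist and satisfy the ν-transmission conditions α·u(0⁻) = β·u(0⁺) and β·u′(0⁻) = α·u′(0⁺). (Thus G_ν is the Green function of the Laplacian on [−1,1] with Dirichlet conditions at ±1 and ν-transmission interior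 boundary conditions at 0.) -/
/-!
On each side of `0` the kernel `G_ν(x, ·)` is `g(x, ·)` plus a term affine in `x`: there
`g(-x, y)` and the cross term factor as `(1 ± x)(1 ∓ y)/2`. So on `(-1, 0)` the solution is the
Green potential `∫_{-1}^0 g(x,y) f(y) dy` plus `(1 + x)/2 · A`, and on `(0, 1)` it is
`∫_0^1 g(x,y) f(y) dy` plus `(1 - x)/2 · B`. The Green potential over `[a, b]` equals
`(1 - x)/2 ∫_a^x (1 + y) f + (1 + x)/2 ∫_x^b (1 - y) f`, whose second derivative is `-f` by the
fundamental theorem of calculus; this formula is smooth across `0`, so the one-sided limits are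
its values there, and the transmission conditions become identities between `A`, `B` and the
two moments `∫_{-1}^0 (1 + y) f`, `∫_0^1 (1 - y) f`. As `u` depends only on `f` on `[-1, 1]`,
`f` may be taken continuous on `ℝ`.
-/

/-- The Green function of `-d²/dx²` on `[-1,1]` with Dirichlet boundary
conditions at `±1`. -/
noncomputable def greenI (x y : ℝ) : ℝ := (1 + min x y) * (1 - max x y) / 2

/-- The `ν`-transmission Green kernel on `[-1,1]²`, `ν = (α,β)`. -/
noncomputable def greenNu (α β : ℝ) (x y : ℝ) : ℝ :=
  if x < 0 ∧ y < 0 then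
    greenI x y + ((β ^ 2 - α ^ 2) / (α ^ 2 + β ^ 2)) * greenI (-x) y
  else if 0 ≤ x ∧ 0 ≤ y then
    greenI x y + ((α ^ 2 - β ^ 2) / (α ^ 2 + β ^ 2)) * greenI (-x) y
  else (2 * α * β / (α ^ 2 + β ^ 2)) * greenI x y

/-- `u(x) = ∫_{-1}^{1} G_ν(x,y) f(y) dy`. -/
noncomputable def greenNuSol (α β : ℝ) (f : ℝ → ℝ) (x : ℝ) : ℝ :=
  ∫ y in (-1 : ℝ)..1, greenNu α β x y * f y

open Set Filter Topology MeasureTheory intervalIntegral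

theorem greenI_of_le {x y : ℝ} (h : y ≤ x) : greenI x y = (1 + y) * (1 - x) / 2 := by
  rw [greenI, min_eq_right h, max_eq_left h]

theorem greenI_of_ge {x y : ℝ} (h : x ≤ y) : greenI x y = (1 + x) * (1 - y) / 2 := by
  rw [greenI, min_eq_left h, max_eq_right h]

@[fun_prop]
theorem continuous_greenI (x : ℝ) : Continuous (greenI x) := by
  unfold greenI; fun_prop

theorem ContinuousOn.exists_continuous_eqOn_Icc {α β : Type*} [LinearOrder α] [TopologicalSpace α]
    [OrderTopology α] [TopologicalSpace β] {f : α → β} {a b : α} (hab : a ≤ b)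
    (hf : ContinuousOn f (Icc a b)) : ∃ F : α → β, Continuous F ∧ EqOn f F (Icc a b) :=
  ⟨IccExtend hab ((Icc a b).domRestrict f), hf.domRestrict.Icc_extend',
    fun _ hx => (IccExtend_of_mem hab ((Icc a b).domRestrict f) hx).symm⟩

theorem integral_eq_add_of_eqOn_Ioo {E : Type*} [NormedAddCommGroup E] [NormedSpace ℝ E]
    {K k₁ k₂ : ℝ → E} {a b c : ℝ} (hab : a ≤ b) (hbc : b ≤ c)
    (h₁ : EqOn K k₁ (Ioo a b)) (h₂ : EqOn K k₂ (Ioo b c))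
    (hk₁ : IntervalIntegrable k₁ volume a b) (hk₂ : IntervalIntegrable k₂ volume b c) :
    ∫ y in a..c, K y = (∫ y in a..b, k₁ y) + ∫ y in b..c, k₂ y := by
  rw [← integral_congr_Ioo_of_le hab h₁, ← integral_congr_Ioo_of_le hbc h₂,
    integral_add_adjacent_intervals (hk₁.congr_uIoo (uIoo_of_le hab ▸ h₁.symm))
      (hk₂.congr_uIoo (uIoo_of_le hbc ▸ h₂.symm))]

theorem Continuous.hasDerivAt_integral_right {φ : ℝ → ℝ} (hφ : Continuous φ) (a x : ℝ) :
    HasDerivAt (fun t => ∫ y in a..t, φ y) (φ x) x :=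
  (hφ.integral_hasStrictDerivAt a x).hasDerivAt

theorem Continuous.hasDerivAt_integral_left {φ : ℝ → ℝ} (hφ : Continuous φ) (b x : ℝ) :
    HasDerivAt (fun t => ∫ y in t..b, φ y) (-φ x) x :=
  integral_hasDerivAt_left (hφ.intervalIntegrable x b) (hφ.stronglyMeasurableAtFilter _ _)
    hφ.continuousAt

theorem hasDerivAt_deriv_and_tendsto_of_eqOn {𝕜 F : Type*} [NontriviallyNormedField 𝕜]
    [NormedAddCommGroup F] [NormedSpace 𝕜 F] {u U U' g : 𝕜 → F} {S s : Set 𝕜} {a : 𝕜}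
    (hu : EqOn u U S) (hS : IsOpen S) (hSa : S ∈ 𝓝[s] a) (hU : ∀ x, HasDerivAt U (U' x) x)
    (hU' : ∀ x, HasDerivAt U' (g x) x) :
    (∀ x ∈ S, DifferentiableAt 𝕜 u x ∧ HasDerivAt (deriv u) (g x) x) ∧
      Tendsto u (𝓝[s] a) (𝓝 (U a)) ∧ Tendsto (deriv u) (𝓝[s] a) (𝓝 (U' a)) := by
  have hu' : EqOn (deriv u) U' S := fun x hx => (hu.deriv hS hx).trans (hU x).deriv
  refine ⟨fun x hx => ⟨?_, ?_⟩, ?_, ?_⟩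
  · exact (hU x).differentiableAt.congr_of_eventuallyEq (hu.eventuallyEq_of_mem (hS.mem_nhds hx))
  · exact (hU' x).congr_of_eventuallyEq (hu'.eventuallyEq_of_mem (hS.mem_nhds hx))
  · exact ((hU a).continuousAt.tendsto.mono_left nhdsWithin_le_nhds).congr'
      (hu.symm.eventuallyEq_of_mem hSa)
  · exact ((hU' a).continuousAt.tendsto.mono_left nhdsWithin_le_nhds).congr'
      (hu'.symm.eventuallyEq_of_mem hSa)

section GreenPotential

variable {φ : ℝ → ℝ}

/-- On `[a, b]` this is `∫_a^b g(x,y) φ(y) dy` (`integral_greenI_mul`); the explicit formula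
extends it to a `C²` function on `ℝ`. -/
noncomputable def greenPotential (a b : ℝ) (φ : ℝ → ℝ) (x : ℝ) : ℝ :=
  (1 - x) / 2 * (∫ y in a..x, (1 + y) * φ y) + (1 + x) / 2 * ∫ y in x..b, (1 - y) * φ y

noncomputable def greenPotentialDeriv (a b : ℝ) (φ : ℝ → ℝ) (x : ℝ) : ℝ :=
  ((∫ y in x..b, (1 - y) * φ y) - ∫ y in a..x, (1 + y) * φ y) / 2

theorem integral_greenI_mul (hφ : Continuous φ) {a b x : ℝ} (hx : x ∈ Icc a b) :
    ∫ y in a..b, greenI x y * φ y = greenPotential a b φ x := by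
  have hi : ∀ c d, IntervalIntegrable (fun y => greenI x y * φ y) volume c d := fun c d =>
    ((continuous_greenI x).mul hφ).intervalIntegrable c d
  rw [← integral_add_adjacent_intervals (hi a x) (hi x b), greenPotential,
    ← intervalIntegral.integral_const_mul, ← intervalIntegral.integral_const_mul]
  congr 1 <;> refine integral_congr fun y hy => ?_
  · rw [uIcc_of_le hx.1] at hy
    rw [greenI_of_le hy.2]; ring
  · rw [uIcc_of_le hx.2] at hy
    rw [greenI_of_ge hy.1]; ring

theorem hasDerivAt_greenPotential (hφ : Continuous φ) (a b x : ℝ) :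
    HasDerivAt (greenPotential a b φ) (greenPotentialDeriv a b φ x) x := by
  have hP := (by fun_prop : Continuous fun y => (1 + y) * φ y).hasDerivAt_integral_right a x
  have hQ := (by fun_prop : Continuous fun y => (1 - y) * φ y).hasDerivAt_integral_left b x
  have hl : HasDerivAt (fun t : ℝ => (1 - t) / 2) (-1 / 2) x := by
    simpa using ((hasDerivAt_id x).const_sub 1).div_const 2
  have hr : HasDerivAt (fun t : ℝ => (1 + t) / 2) (1 / 2) x := by
    simpa using ((hasDerivAt_id x).const_add 1).div_const 2
  -- the boundary terms `±(1 - x)(1 + x) φ(x) / 2` cancel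
  exact ((hl.mul hP).add (hr.mul hQ)).congr_deriv (by rw [greenPotentialDeriv]; ring)

theorem hasDerivAt_greenPotentialDeriv (hφ : Continuous φ) (a b x : ℝ) :
    HasDerivAt (greenPotentialDeriv a b φ) (-φ x) x := by
  have hP := (by fun_prop : Continuous fun y => (1 + y) * φ y).hasDerivAt_integral_right a x
  have hQ := (by fun_prop : Continuous fun y => (1 - y) * φ y).hasDerivAt_integral_left b x
  exact ((hQ.sub hP).div_const 2).congr_deriv (by ring)

end GreenPotential

section Transmission

variable (α β : ℝ) (f : ℝ → ℝ)

noncomputable def greenNuLeftCoeff : ℝ :=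
  (β ^ 2 - α ^ 2) / (α ^ 2 + β ^ 2) * (∫ y in (-1 : ℝ)..0, (1 + y) * f y) +
    2 * α * β / (α ^ 2 + β ^ 2) * ∫ y in (0 : ℝ)..1, (1 - y) * f y

noncomputable def greenNuRightCoeff : ℝ :=
  2 * α * β / (α ^ 2 + β ^ 2) * (∫ y in (-1 : ℝ)..0, (1 + y) * f y) +
    (α ^ 2 - β ^ 2) / (α ^ 2 + β ^ 2) * ∫ y in (0 : ℝ)..1, (1 - y) * f y

variable {f}

theorem greenNuSol_eqOn_Ico (hf : Continuous f) :
    EqOn (greenNuSol α β f)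
      (fun x => greenPotential (-1) 0 f x + (1 + x) / 2 * greenNuLeftCoeff α β f) (Ico (-1) 0) := by
  rintro x ⟨hx₁, hx₀⟩
  set c := (β ^ 2 - α ^ 2) / (α ^ 2 + β ^ 2)
  set d := 2 * α * β / (α ^ 2 + β ^ 2)
  have hneg : EqOn (fun y => greenNu α β x y * f y)
      (fun y => greenI x y * f y + c * (1 + x) / 2 * ((1 + y) * f y)) (Ioo (-1) 0) := by
    rintro y ⟨-, hy₀⟩
    simp only [greenNu, if_pos (And.intro hx₀ hy₀), greenI_of_le (by linarith : y ≤ -x)]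
    ring
  have hpos : EqOn (fun y => greenNu α β x y * f y)
      (fun y => d * (1 + x) / 2 * ((1 - y) * f y)) (Ioo 0 1) := by
    rintro y ⟨hy₀, -⟩
    simp only [greenNu, if_neg (fun h : x < 0 ∧ y < 0 => hy₀.not_gt h.2),
      if_neg (fun h : 0 ≤ x ∧ 0 ≤ y => hx₀.not_ge h.1), greenI_of_ge (by linarith : x ≤ y)]
    ring
  rw [greenNuSol, integral_eq_add_of_eqOn_Ioo (by norm_num) (by norm_num) hneg hpos
      ((by fun_prop : Continuous _).intervalIntegrable _ _)
      ((by fun_prop : Continuous _).intervalIntegrable _ _),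
    integral_add ((by fun_prop : Continuous fun y => greenI x y * f y).intervalIntegrable _ _)
      ((by fun_prop : Continuous fun y => (1 + y) * f y).intervalIntegrable _ _ |>.const_mul _),
    integral_greenI_mul hf ⟨hx₁, hx₀.le⟩, intervalIntegral.integral_const_mul,
    intervalIntegral.integral_const_mul, greenNuLeftCoeff]
  ring

theorem greenNuSol_eqOn_Icc (hf : Continuous f) :
    EqOn (greenNuSol α β f)
      (fun x => greenPotential 0 1 f x + (1 - x) / 2 * greenNuRightCoeff α β f) (Icc 0 1) := by
  rintro x ⟨hx₀, hx₁⟩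
  set c := (α ^ 2 - β ^ 2) / (α ^ 2 + β ^ 2)
  set d := 2 * α * β / (α ^ 2 + β ^ 2)
  have hneg : EqOn (fun y => greenNu α β x y * f y)
      (fun y => d * (1 - x) / 2 * ((1 + y) * f y)) (Ioo (-1) 0) := by
    rintro y ⟨-, hy₀⟩
    simp only [greenNu, if_neg (fun h : x < 0 ∧ y < 0 => hx₀.not_gt h.1),
      if_neg (fun h : 0 ≤ x ∧ 0 ≤ y => hy₀.not_ge h.2), greenI_of_le (by linarith : y ≤ x)]
    ring
  have hpos : EqOn (fun y => greenNu α β x y * f y)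
      (fun y => greenI x y * f y + c * (1 - x) / 2 * ((1 - y) * f y)) (Ioo 0 1) := by
    rintro y ⟨hy₀, -⟩
    simp only [greenNu, if_neg (fun h : x < 0 ∧ y < 0 => hx₀.not_gt h.1),
      if_pos (And.intro hx₀ hy₀.le), greenI_of_ge (by linarith : -x ≤ y)]
    ring
  rw [greenNuSol, integral_eq_add_of_eqOn_Ioo (by norm_num) (by norm_num) hneg hpos
      ((by fun_prop : Continuous _).intervalIntegrable _ _)
      ((by fun_prop : Continuous _).intervalIntegrable _ _),
    integral_add ((by fun_prop : Continuous fun y => greenI x y * f y).intervalIntegrable _ _)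
      ((by fun_prop : Continuous fun y => (1 - y) * f y).intervalIntegrable _ _ |>.const_mul _),
    integral_greenI_mul hf ⟨hx₀, hx₁⟩, intervalIntegral.integral_const_mul,
    intervalIntegral.integral_const_mul, greenNuRightCoeff]
  ring

end Transmission

theorem greenNuSol_congr (α β : ℝ) {f F : ℝ → ℝ} (h : EqOn f F (Icc (-1) 1)) :
    greenNuSol α β f = greenNuSol α β F :=
  funext fun _ => integral_congr fun y hy => by
    rw [uIcc_of_le (by norm_num)] at hy
    simp only [h hy]

theorem greenNuCoeff_transmission_value (α β : ℝ) (f : ℝ → ℝ) :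
    α * ((∫ y in (-1 : ℝ)..0, (1 + y) * f y) + greenNuLeftCoeff α β f) =
      β * ((∫ y in (0 : ℝ)..1, (1 - y) * f y) + greenNuRightCoeff α β f) := by
  rw [greenNuLeftCoeff, greenNuRightCoeff]
  by_cases hs : α ^ 2 + β ^ 2 = 0
  · obtain ⟨rfl, rfl⟩ : α = 0 ∧ β = 0 := by constructor <;> nlinarith
    simp
  · field_simp
    ring

theorem greenNuCoeff_transmission_deriv (α β : ℝ) (f : ℝ → ℝ) :
    β * (greenNuLeftCoeff α β f - ∫ y in (-1 : ℝ)..0, (1 + y) * f y) =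
      α * ((∫ y in (0 : ℝ)..1, (1 - y) * f y) - greenNuRightCoeff α β f) := by
  rw [greenNuLeftCoeff, greenNuRightCoeff]
  by_cases hs : α ^ 2 + β ^ 2 = 0
  · obtain ⟨rfl, rfl⟩ : α = 0 ∧ β = 0 := by constructor <;> nlinarith
    simp
  · field_simp
    ring

theorem green_interval_transmission_general (α β : ℝ)
    (f : ℝ → ℝ) (hf : ContinuousOn f (Set.Icc (-1) 1)) :
    greenNuSol α β f (-1) = 0 ∧ greenNuSol α β f 1 = 0 ∧
    (∀ x ∈ Set.Ioo (-1 : ℝ) 0 ∪ Set.Ioo (0 : ℝ) 1,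
      DifferentiableAt ℝ (greenNuSol α β f) x ∧
      HasDerivAt (deriv (greenNuSol α β f)) (-f x) x) ∧
    ∃ L₁ L₂ M₁ M₂ : ℝ,
      Filter.Tendsto (greenNuSol α β f) (nhdsWithin 0 (Set.Iio 0)) (nhds L₁) ∧
      Filter.Tendsto (greenNuSol α β f) (nhdsWithin 0 (Set.Ioi 0)) (nhds L₂) ∧
      Filter.Tendsto (deriv (greenNuSol α β f)) (nhdsWithin 0 (Set.Iio 0)) (nhds M₁) ∧
      Filter.Tendsto (deriv (greenNuSol α β f)) (nhdsWithin 0 (Set.Ioi 0)) (nhds M₂) ∧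
      α * L₁ = β * L₂ ∧ β * M₁ = α * M₂ := by
  obtain ⟨F, hF, hfF⟩ := hf.exists_continuous_eqOn_Icc (by norm_num)
  rw [greenNuSol_congr α β hfF]
  have hl := greenNuSol_eqOn_Ico α β hF
  have hr := greenNuSol_eqOn_Icc α β hF
  obtain ⟨hl₂, hl₀, hl₁⟩ := hasDerivAt_deriv_and_tendsto_of_eqOn (hl.mono Ioo_subset_Ico_self)
    isOpen_Ioo (Ioo_mem_nhdsLT (by norm_num))
    (fun x => (hasDerivAt_greenPotential hF _ _ x).add
      ((((hasDerivAt_id x).const_add 1).div_const 2).mul_const _))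
    fun x => (hasDerivAt_greenPotentialDeriv hF _ _ x).add_const _
  obtain ⟨hr₂, hr₀, hr₁⟩ := hasDerivAt_deriv_and_tendsto_of_eqOn (hr.mono Ioo_subset_Icc_self)
    isOpen_Ioo (Ioo_mem_nhdsGT (by norm_num))
    (fun x => (hasDerivAt_greenPotential hF _ _ x).add
      ((((hasDerivAt_id x).const_sub 1).div_const 2).mul_const _))
    fun x => (hasDerivAt_greenPotentialDeriv hF _ _ x).add_const _
  refine ⟨(hl ⟨le_rfl, by norm_num⟩).trans (by simp [greenPotential]),
    (hr ⟨zero_le_one, le_rfl⟩).trans (by simp [greenPotential]), ?_,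
    _, _, _, _, hl₀, hr₀, hl₁, hr₁, ?_, ?_⟩
  · rintro x (hx | hx)
    · rw [hfF ⟨hx.1.le, by linarith [hx.2]⟩]
      exact hl₂ x hx
    · rw [hfF ⟨by linarith [hx.1], hx.2.le⟩]
      exact hr₂ x hx
  · simp only [greenPotential, integral_same]
    linear_combination (1 / 2) * greenNuCoeff_transmission_value α β F
  · simp only [greenPotentialDeriv, integral_same]
    linear_combination (1 / 2) * greenNuCoeff_transmission_deriv α β F

/-- `G_ν` is the Green function of the Laplacian on `[-1,1]` with Dirichlet
conditions at `±1` and `ν`-transmission interior boundary conditions at `0`: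
for continuous `f`, the function `u(x) = ∫_{-1}^1 G_ν(x,y) f(y) dy` vanishes
at `±1`, satisfies `u'' = -f` on `(-1,0) ∪ (0,1)`, and its one-sided limits at
`0` satisfy `α·u(0⁻) = β·u(0⁺)` and `β·u'(0⁻) = α·u'(0⁺)`. -/
theorem green_interval_transmission (α β : ℝ) (hν : (α, β) ≠ (0, 0))
    (f : ℝ → ℝ) (hf : ContinuousOn f (Set.Icc (-1) 1)) :
    greenNuSol α β f (-1) = 0 ∧ greenNuSol α β f 1 = 0 ∧
    (∀ x ∈ Set.Ioo (-1 : ℝ) 0 ∪ Set.Ioo (0 : ℝ) 1,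
      DifferentiableAt ℝ (greenNuSol α β f) x ∧
      HasDerivAt (deriv (greenNuSol α β f)) (-f x) x) ∧
    ∃ L₁ L₂ M₁ M₂ : ℝ,
      Filter.Tendsto (greenNuSol α β f) (nhdsWithin 0 (Set.Iio 0)) (nhds L₁) ∧
      Filter.Tendsto (greenNuSol α β f) (nhdsWithin 0 (Set.Ioi 0)) (nhds L₂) ∧
      Filter.Tendsto (deriv (greenNuSol α β f)) (nhdsWithin 0 (Set.Iio 0)) (nhds M₁) ∧
      Filter.Tendsto (deriv (greenNuSol α β f)) (nhdsWithin 0 (Set.Ioi 0)) (nhds M₂) ∧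
      α * L₁ = β * L₂ ∧ β * M₁ = α * M₂ :=
  green_interval_transmission_general α β f hf
end
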